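/- arXiv:1509.05676 — 3 statements merged into one kernel-verified Lean document; each statement's English description precedes it below -/
import Mathlib

section
/- Let A ∈ M_d(ℂ), θ ∈ ℝ, X_m(θ) the maximal eigenspace of A(θ) = Re(e^{−iθ}A), and let P be the orthogonal projection onto X_m(θ). The exposed face F of W(A) with outward normal e^{iθ} equals { e^{iθ}(λ_m(θ) + i·μ) : μ ∈ W(P·Im(e^{−iθ}A)·P restricted to X_m(θ)) }, i.e., the face is an isometric affine copy of the numerical range of the compression of Im(e^{−iθ}A) to X_m(θ). -/
/-!
Multiplying by `e^{-iθ}` splits the numerical-range map as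
`(x* A x) e^{-iθ} = x* A(θ) x + i · x* Im(e^{-iθ} A) x` with both quadratic forms real, so for
`β = x* A x` the support functional `Re(β e^{-iθ})` is the Rayleigh quotient of `A(θ)` at `x`.
It equals the top eigenvalue `λ_m(θ)` exactly when `x ∈ X_m(θ)`: `λ_m(θ) - A(θ)` is positive
semidefinite, and its quadratic form vanishes only on its kernel.
-/

open Matrix Complex

/-- Numerical range map `f_A(x) = x* A x`. -/
noncomputable def nrMap {d : ℕ} (A : Matrix (Fin d) (Fin d) ℂ) (x : Fin d → ℂ) : ℂ :=
  star x ⬝ᵥ A *ᵥ x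

/-- Real part `Re(A) = (A + A*)/2`. -/
noncomputable def reP {d : ℕ} (A : Matrix (Fin d) (Fin d) ℂ) : Matrix (Fin d) (Fin d) ℂ :=
  ((2:ℂ)⁻¹) • (A + Aᴴ)

/-- Imaginary part `Im(A) = (A - A*)/(2i)`. -/
noncomputable def imP {d : ℕ} (A : Matrix (Fin d) (Fin d) ℂ) : Matrix (Fin d) (Fin d) ℂ :=
  (((2:ℂ) * Complex.I)⁻¹) • (A - Aᴴ)

/-- `A(θ) = cos θ · Re(A) + sin θ · Im(A)`. -/
noncomputable def Ath {d : ℕ} (A : Matrix (Fin d) (Fin d) ℂ) (θ : ℝ) :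
    Matrix (Fin d) (Fin d) ℂ :=
  Real.cos θ • reP A + Real.sin θ • imP A

/-- Numerical range `W(A)`. -/
noncomputable def numRange {d : ℕ} (A : Matrix (Fin d) (Fin d) ℂ) : Set ℂ :=
  {z : ℂ | ∃ x : Fin d → ℂ, star x ⬝ᵥ x = 1 ∧ z = nrMap A x}

namespace Matrix.IsHermitian

open scoped ComplexOrder

variable {𝕜 n : Type*} [RCLike 𝕜] [Fintype n] [DecidableEq n] {H : Matrix n n 𝕜}

theorem posSemidef_smul_one_sub (hH : H.IsHermitian) {lam : ℝ}
    (hlam : lam ∈ upperBounds {μ : ℝ | ∃ v : n → 𝕜, v ≠ 0 ∧ H *ᵥ v = (μ : 𝕜) • v}) :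
    ((lam : 𝕜) • 1 - H).PosSemidef := by
  have hM : ((lam : 𝕜) • 1 - H).IsHermitian :=
    (isHermitian_one.smul (by simp [IsSelfAdjoint])).sub hH
  refine hM.posSemidef_iff_eigenvalues_nonneg.mpr fun i => ?_
  set v : n → 𝕜 := ⇑(hM.eigenvectorBasis i)
  have hv : v ≠ 0 := fun h =>
    hM.eigenvectorBasis.orthonormal.ne_zero i (by ext k; exact congrFun h k)
  have hHv : H *ᵥ v = ((lam - hM.eigenvalues i : ℝ) : 𝕜) • v := by
    have := hM.mulVec_eigenvectorBasis i
    rw [sub_mulVec, smul_mulVec, one_mulVec] at this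
    rw [RCLike.ofReal_sub, sub_smul, ← RCLike.real_smul_eq_coe_smul (K := 𝕜) (hM.eigenvalues i),
      ← this, sub_sub_cancel]
  have := hlam ⟨v, hv, hHv⟩
  show (0 : ℝ) ≤ _
  linarith

theorem mulVec_eq_smul_of_dotProduct_mulVec_eq (hH : H.IsHermitian) {lam : ℝ}
    (hlam : lam ∈ upperBounds {μ : ℝ | ∃ v : n → 𝕜, v ≠ 0 ∧ H *ᵥ v = (μ : 𝕜) • v})
    {x : n → 𝕜} (hx : star x ⬝ᵥ H *ᵥ x = lam * (star x ⬝ᵥ x)) :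
    H *ᵥ x = (lam : 𝕜) • x := by
  have h0 : star x ⬝ᵥ ((lam : 𝕜) • 1 - H) *ᵥ x = 0 := by
    rw [sub_mulVec, smul_mulVec, one_mulVec, dotProduct_sub, dotProduct_smul, hx, smul_eq_mul,
      sub_self]
  have := ((hH.posSemidef_smul_one_sub hlam).dotProduct_mulVec_zero_iff x).mp h0
  rw [sub_mulVec, smul_mulVec, one_mulVec, sub_eq_zero] at this
  exact this.symm

end Matrix.IsHermitian

open ComplexConjugate

variable {d : ℕ}

theorem imP_eq_reP (M : Matrix (Fin d) (Fin d) ℂ) : imP M = reP (-I • M) := by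
  ext i j
  simp [imP, reP]
  field_simp
  ring

theorem isHermitian_reP (M : Matrix (Fin d) (Fin d) ℂ) : (reP M).IsHermitian :=
  (isHermitian_add_transpose_self M).smul (by simp [IsSelfAdjoint])

theorem isHermitian_imP (M : Matrix (Fin d) (Fin d) ℂ) : (imP M).IsHermitian :=
  imP_eq_reP M ▸ isHermitian_reP _

theorem reP_add_I_smul_imP (M : Matrix (Fin d) (Fin d) ℂ) : reP M + I • imP M = M := by
  ext i j
  simp only [reP, imP, Matrix.add_apply, Matrix.smul_apply, Matrix.sub_apply, conjTranspose_apply,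
    smul_eq_mul]
  field_simp
  ring

theorem reP_exp_neg_smul (A : Matrix (Fin d) (Fin d) ℂ) (θ : ℝ) :
    reP (exp (-(θ : ℂ) * I) • A) = Ath A θ := by
  have he : exp (-(θ : ℂ) * I) = Real.cos θ - Real.sin θ * I := by
    rw [neg_mul, ← neg_mul, exp_mul_I, cos_neg, sin_neg, ← ofReal_cos, ← ofReal_sin]
    ring
  ext i j
  simp only [reP, imP, Ath, Matrix.add_apply, Matrix.smul_apply, Matrix.sub_apply,
    conjTranspose_apply, smul_eq_mul, he, star_mul', star_sub, star_def, conj_I, conj_ofReal,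
    real_smul]
  field_simp
  linear_combination ((Real.sin θ : ℂ) * (conj (A j i) - A i j)) * I_sq

theorem isHermitian_Ath (A : Matrix (Fin d) (Fin d) ℂ) (θ : ℝ) : (Ath A θ).IsHermitian :=
  reP_exp_neg_smul A θ ▸ isHermitian_reP _

theorem nrMap_smul (c : ℂ) (A : Matrix (Fin d) (Fin d) ℂ) (x : Fin d → ℂ) :
    nrMap (c • A) x = c * nrMap A x := by
  rw [nrMap, nrMap, smul_mulVec, dotProduct_smul, smul_eq_mul]

theorem nrMap_reP_add_I_mul_nrMap_imP (M : Matrix (Fin d) (Fin d) ℂ) (x : Fin d → ℂ) :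
    nrMap (reP M) x + I * nrMap (imP M) x = nrMap M x := by
  conv_rhs => rw [← reP_add_I_smul_imP M]
  simp only [nrMap, add_mulVec, smul_mulVec, dotProduct_add, dotProduct_smul, smul_eq_mul]

theorem Matrix.IsHermitian.im_nrMap {H : Matrix (Fin d) (Fin d) ℂ} (hH : H.IsHermitian)
    (x : Fin d → ℂ) : (nrMap H x).im = 0 :=
  hH.im_star_dotProduct_mulVec_self x

theorem nrMap_of_mulVec_eq_smul {H : Matrix (Fin d) (Fin d) ℂ} {x : Fin d → ℂ} {μ : ℂ}
    (hx : star x ⬝ᵥ x = 1) (hHx : H *ᵥ x = μ • x) : nrMap H x = μ := by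
  rw [nrMap, hHx, dotProduct_smul, hx, smul_eq_mul, mul_one]

theorem nrMap_mul_conj_exp (A : Matrix (Fin d) (Fin d) ℂ) (θ : ℝ) (x : Fin d → ℂ) :
    nrMap A x * conj (exp (θ * I)) =
      nrMap (Ath A θ) x + I * nrMap (imP (exp (-(θ : ℂ) * I) • A)) x := by
  rw [← reP_exp_neg_smul, nrMap_reP_add_I_mul_nrMap_imP, nrMap_smul, mul_comm, ← Complex.exp_conj]
  simp

theorem re_nrMap_mul_conj_exp (A : Matrix (Fin d) (Fin d) ℂ) (θ : ℝ) (x : Fin d → ℂ) :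
    (nrMap A x * conj (exp (θ * I))).re = (nrMap (Ath A θ) x).re := by
  simp [nrMap_mul_conj_exp, (isHermitian_imP _).im_nrMap]

theorem nrMap_eq_exp_mul (A : Matrix (Fin d) (Fin d) ℂ) (θ : ℝ) (x : Fin d → ℂ) :
    nrMap A x = exp (θ * I) *
      (nrMap (Ath A θ) x + I * nrMap (imP (exp (-(θ : ℂ) * I) • A)) x) := by
  rw [← nrMap_mul_conj_exp, ← Complex.exp_conj, mul_left_comm, ← exp_add]
  simp

/-- The exposed face of `W(A)` with outward normal `e^{iθ}` equals the isometric affine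
copy `e^{iθ}(λ_m(θ) + i·W(Im(e^{-iθ}A)|_{X_m(θ)}))` of the numerical range of the
compression of `Im(e^{-iθ}A)` to the maximal eigenspace `X_m(θ)` of `A(θ)`.  (Note that for
a unit vector `y ∈ X_m(θ)` one has `y*(P B P)y = y*By`, so the numerical range of the
compression is the set of Rayleigh quotients of `Im(e^{-iθ}A)` over unit vectors of `X_m(θ)`.) -/
theorem stmt12 {d : ℕ} (A : Matrix (Fin d) (Fin d) ℂ) (θ : ℝ) (lam : ℝ)
    (hmax : IsGreatest {μ : ℝ | ∃ v : Fin d → ℂ, v ≠ 0 ∧ Ath A θ *ᵥ v = (μ:ℂ) • v} lam) :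
    {β ∈ numRange A | (β * (starRingEnd ℂ) (Complex.exp (θ * Complex.I))).re = lam}
      = {β : ℂ | ∃ y : Fin d → ℂ, star y ⬝ᵥ y = 1 ∧ Ath A θ *ᵥ y = (lam:ℂ) • y ∧
          β = Complex.exp (θ * Complex.I) * ((lam : ℂ) +
            Complex.I * nrMap (imP (Complex.exp (-(θ:ℂ) * Complex.I) • A)) y)} := by
  ext β
  constructor
  · rintro ⟨⟨x, hx, rfl⟩, hface⟩
    have hR : nrMap (Ath A θ) x = lam :=
      Complex.ext (by rw [← re_nrMap_mul_conj_exp, hface, ofReal_re])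
        ((isHermitian_Ath A θ).im_nrMap x)
    have hev : Ath A θ *ᵥ x = (lam : ℂ) • x :=
      (isHermitian_Ath A θ).mulVec_eq_smul_of_dotProduct_mulVec_eq hmax.2
        (by rw [hx, mul_one]; exact hR)
    exact ⟨x, hx, hev, by rw [nrMap_eq_exp_mul A θ x, hR]⟩
  · rintro ⟨y, hy, hev, rfl⟩
    have hR := nrMap_of_mulVec_eq_smul hy hev
    rw [← hR, ← nrMap_eq_exp_mul]
    exact ⟨⟨y, hy, rfl⟩, by rw [re_nrMap_mul_conj_exp, hR, ofReal_re]⟩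
end

section
/- Let A ∈ M_d(ℂ) and α ∈ W(A). If there exist matrices A_n → A and nondegenerate segments s_n ⊂ W(A_n), each s_n an exposed face of W(A_n), with s_n → {α} in Hausdorff distance, then f_A^{-1}(α) contains two orthogonal unit vectors; in particular α is a multiply generated point of W(A). -/
open Matrix Complex

/-!
An exposed face of `W(B)` cut out by a real functional `l` is the image under `f_B` of the unit
maximizers of the Hermitian form `x ↦ l (x* B x)`, and these maximizers are the unit vectors of its
top eigenspace. Two distinct points of the face come from non-proportional maximizers, so
Gram–Schmidt produces an orthonormal pair of maximizers whose values lie in the face. Along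
`A_n → A` a subsequence of these orthonormal pairs converges by compactness, and since the faces
shrink to `α`, continuity of `(B, x) ↦ x* B x` sends both limit vectors to `α`.
-/

open Metric Filter Topology Set Module.End

section InnerProductSpace

variable {𝕜 E : Type*} [RCLike 𝕜] [NormedAddCommGroup E] [InnerProductSpace 𝕜 E]

lemma Submodule.exists_norm_eq_one_inner_eq_zero (V : Submodule 𝕜 E) {x y : E}
    (hx : ‖x‖ = 1) (hxV : x ∈ V) (hyV : y ∈ V) (hxy : ∀ c : 𝕜, y ≠ c • x) :
    ∃ q ∈ V, ‖q‖ = 1 ∧ inner 𝕜 x q = 0 := by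
  set v := y - inner 𝕜 x y • x
  have hv : v ≠ 0 := sub_ne_zero.mpr (hxy _)
  refine ⟨(‖v‖⁻¹ : 𝕜) • v, V.smul_mem _ (V.sub_mem hyV (V.smul_mem _ hxV)), ?_, ?_⟩
  · simp [norm_smul, hv]
  · simp [v, inner_smul_right, inner_sub_right, inner_self_eq_norm_sq_to_K, hx]

lemma ContinuousLinearMap.reApplyInnerSelf_eq_of_mem_eigenspace (T : E →L[𝕜] E) {μ : ℝ} {x : E}
    (hx : ‖x‖ = 1) (h : x ∈ eigenspace (T : E →ₗ[𝕜] E) μ) : T.reApplyInnerSelf x = μ := by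
  have hTx : T x = (μ : 𝕜) • x := mem_eigenspace_iff.mp h
  simp [ContinuousLinearMap.reApplyInnerSelf, hTx, inner_smul_left, inner_self_eq_norm_sq_to_K, hx]

/-- Maximizers of a self-adjoint form on the unit sphere are the unit vectors of the top
eigenspace, so two non-proportional ones span a plane of maximizers. -/
theorem IsSelfAdjoint.exists_isMaxOn_inner_eq_zero [CompleteSpace E] {T : E →L[𝕜] E}
    (hT : IsSelfAdjoint T) {x y : E} (hx : ‖x‖ = 1) (hy : ‖y‖ = 1)
    (hmx : IsMaxOn T.reApplyInnerSelf (sphere 0 1) x)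
    (hmy : IsMaxOn T.reApplyInnerSelf (sphere 0 1) y) (hxy : ∀ c : 𝕜, y ≠ c • x) :
    ∃ q, ‖q‖ = 1 ∧ inner 𝕜 x q = 0 ∧ IsMaxOn T.reApplyInnerSelf (sphere 0 1) q := by
  have mem_top : ∀ z : E, ‖z‖ = 1 → IsMaxOn T.reApplyInnerSelf (sphere 0 1) z →
      z ∈ eigenspace (T : E →ₗ[𝕜] E) (⨆ z : {z : E // z ≠ 0}, T.rayleighQuotient z : ℝ) :=
    fun z hz hmz => (hT.hasEigenvector_of_isMaxOn (norm_ne_zero_iff.mp (by simp [hz]))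
      (by rwa [hz])).1
  obtain ⟨q, hqV, hq, hxq⟩ := Submodule.exists_norm_eq_one_inner_eq_zero _ hx
    (mem_top x hx hmx) (mem_top y hy hmy) hxy
  have hqx : T.reApplyInnerSelf q = T.reApplyInnerSelf x := by
    rw [T.reApplyInnerSelf_eq_of_mem_eigenspace hq hqV,
      T.reApplyInnerSelf_eq_of_mem_eigenspace hx (mem_top x hx hmx)]
  exact ⟨q, hq, hxq, fun z hz => hqx ▸ hmx hz⟩

end InnerProductSpace

lemma tendsto_of_forall_mem_of_tendsto_hausdorffDist {X ι : Type*} [PseudoMetricSpace X]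
    {l : Filter ι} {s : ι → Set X} {z : ι → X} {a : X} (hs : ∀ i, Bornology.IsBounded (s i))
    (hz : ∀ i, z i ∈ s i) (h : Tendsto (fun i => hausdorffDist (s i) {a}) l (𝓝 0)) :
    Tendsto z l (𝓝 a) := by
  refine tendsto_iff_dist_tendsto_zero.2 <| squeeze_zero (fun _ => dist_nonneg) (fun i => ?_) h
  rw [← infDist_singleton]
  exact infDist_le_hausdorffDist_of_mem (hz i) <| hausdorffEDist_ne_top_of_nonempty_of_bounded
    ⟨_, hz i⟩ (singleton_nonempty a) (hs i) Bornology.isBounded_singleton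

section UnitVectors

variable {ι : Type*} [Fintype ι]

lemma star_smul_dotProduct_mulVec_smul (M : Matrix ι ι ℂ) (c : ℂ) (x : ι → ℂ) :
    star (c • x) ⬝ᵥ M *ᵥ (c • x) = (starRingEnd ℂ c * c) * (star x ⬝ᵥ M *ᵥ x) := by
  simp only [star_smul, mulVec_smul, smul_dotProduct, dotProduct_smul, smul_eq_mul,
    Complex.star_def]
  ring

lemma star_dotProduct_conjTranspose_mulVec (M : Matrix ι ι ℂ) (x : ι → ℂ) :
    star x ⬝ᵥ Mᴴ *ᵥ x = starRingEnd ℂ (star x ⬝ᵥ M *ᵥ x) := by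
  rw [← Complex.star_def, star_dotProduct, star_mulVec, conjTranspose_conjTranspose,
    dotProduct_mulVec]

lemma inner_toLp_toLp_eq_star_dotProduct (x y : ι → ℂ) :
    inner ℂ (WithLp.toLp 2 x) (WithLp.toLp 2 y) = star x ⬝ᵥ y := by
  rw [EuclideanSpace.inner_toLp_toLp, dotProduct_comm]

lemma norm_toLp_eq_one_iff (x : ι → ℂ) : ‖WithLp.toLp 2 x‖ = 1 ↔ star x ⬝ᵥ x = 1 := by
  have h : star x ⬝ᵥ x = ((‖WithLp.toLp 2 x‖ ^ 2 : ℝ) : ℂ) := by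
    rw [← inner_toLp_toLp_eq_star_dotProduct]
    exact_mod_cast inner_self_eq_norm_sq_to_K (𝕜 := ℂ) _
  rw [h, Complex.ofReal_eq_one, pow_eq_one_iff_of_nonneg (norm_nonneg _) two_ne_zero]

lemma isCompact_setOf_star_dotProduct_self_eq_one :
    IsCompact {x : ι → ℂ | star x ⬝ᵥ x = 1} := by
  convert (isCompact_sphere (0 : EuclideanSpace ℂ ι) 1).image (PiLp.continuous_ofLp 2 _)
  ext x
  rw [mem_ofPred_eq, ← norm_toLp_eq_one_iff]
  exact ⟨fun hx => ⟨_, by simpa using hx, rfl⟩, by rintro ⟨v, hv, rfl⟩; simpa using hv⟩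

lemma isCompact_orthonormal_pairs :
    IsCompact {p : (ι → ℂ) × (ι → ℂ) |
      star p.1 ⬝ᵥ p.1 = 1 ∧ star p.2 ⬝ᵥ p.2 = 1 ∧ star p.1 ⬝ᵥ p.2 = 0} := by
  have hS := isCompact_setOf_star_dotProduct_self_eq_one (ι := ι)
  have horth : IsClosed {p : (ι → ℂ) × (ι → ℂ) | star p.1 ⬝ᵥ p.2 = 0} :=
    isClosed_eq (by fun_prop) continuous_const
  convert (hS.prod hS).inter_right horth using 1
  ext
  simp [and_assoc]

end UnitVectors

section NumericalRange

variable {d : ℕ}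

lemma nrMap_smul_of_unit {B : Matrix (Fin d) (Fin d) ℂ} {x : Fin d → ℂ} {c : ℂ}
    (hx : star x ⬝ᵥ x = 1) (hcx : star (c • x) ⬝ᵥ (c • x) = 1) :
    nrMap B (c • x) = nrMap B x := by
  have hc : starRingEnd ℂ c * c = 1 := by
    simpa [hx] using (star_smul_dotProduct_mulVec_smul 1 c x).symm.trans (by simpa using hcx)
  rw [nrMap, star_smul_dotProduct_mulVec_smul, hc, one_mul, nrMap]

lemma reP_isHermitian (B : Matrix (Fin d) (Fin d) ℂ) : (reP B).IsHermitian := by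
  simp [reP, IsHermitian, conjTranspose_smul, add_comm]

lemma imP_isHermitian (B : Matrix (Fin d) (Fin d) ℂ) : (imP B).IsHermitian := by
  simp only [imP, IsHermitian, conjTranspose_smul, conjTranspose_sub, conjTranspose_conjTranspose]
  simp only [star_inv₀, star_mul', Complex.star_def, Complex.conj_I, Complex.conj_ofNat]
  module

lemma re_star_dotProduct_reP_mulVec (B : Matrix (Fin d) (Fin d) ℂ) (x : Fin d → ℂ) :
    (star x ⬝ᵥ reP B *ᵥ x).re = (nrMap B x).re := by
  rw [reP, smul_mulVec, dotProduct_smul, add_mulVec, dotProduct_add,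
    star_dotProduct_conjTranspose_mulVec, smul_eq_mul, Complex.add_conj]
  simp [nrMap]

lemma re_star_dotProduct_imP_mulVec (B : Matrix (Fin d) (Fin d) ℂ) (x : Fin d → ℂ) :
    (star x ⬝ᵥ imP B *ᵥ x).re = (nrMap B x).im := by
  rw [imP, smul_mulVec, dotProduct_smul, sub_mulVec, dotProduct_sub,
    star_dotProduct_conjTranspose_mulVec, smul_eq_mul, Complex.sub_conj]
  field_simp
  simp [nrMap]

/-- For `l = Re (e^{-iθ} ·)` this is the matrix `Re (e^{-iθ} B)` of the paper. -/
noncomputable def functionalMatrix (B : Matrix (Fin d) (Fin d) ℂ) (l : ℂ →L[ℝ] ℝ) :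
    Matrix (Fin d) (Fin d) ℂ :=
  (l 1 : ℂ) • reP B + (l I : ℂ) • imP B

lemma functionalMatrix_isHermitian (B : Matrix (Fin d) (Fin d) ℂ) (l : ℂ →L[ℝ] ℝ) :
    (functionalMatrix B l).IsHermitian := by
  unfold functionalMatrix
  rw [IsHermitian, conjTranspose_add, conjTranspose_smul, conjTranspose_smul,
    (reP_isHermitian B).eq, (imP_isHermitian B).eq]
  simp

lemma re_star_dotProduct_functionalMatrix_mulVec (B : Matrix (Fin d) (Fin d) ℂ)
    (l : ℂ →L[ℝ] ℝ) (x : Fin d → ℂ) :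
    (star x ⬝ᵥ functionalMatrix B l *ᵥ x).re = l (nrMap B x) := by
  have hl : l (nrMap B x) = (nrMap B x).re * l 1 + (nrMap B x).im * l I := by
    have hz : (nrMap B x).re • (1 : ℂ) + (nrMap B x).im • I = nrMap B x := by
      simp [Complex.real_smul]
    rw [← hz, map_add, map_smul, map_smul, smul_eq_mul, smul_eq_mul, hz]
  rw [hl, functionalMatrix, add_mulVec, dotProduct_add, smul_mulVec, smul_mulVec,
    dotProduct_smul, dotProduct_smul, smul_eq_mul, smul_eq_mul, Complex.add_re,
    Complex.re_ofReal_mul, Complex.re_ofReal_mul, re_star_dotProduct_reP_mulVec,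
    re_star_dotProduct_imP_mulVec]
  ring

lemma reApplyInnerSelf_toEuclideanCLM_functionalMatrix (B : Matrix (Fin d) (Fin d) ℂ)
    (l : ℂ →L[ℝ] ℝ) (x : Fin d → ℂ) :
    (toEuclideanCLM (𝕜 := ℂ) (functionalMatrix B l)).reApplyInnerSelf (WithLp.toLp 2 x) =
      l (nrMap B x) := by
  rw [← re_star_dotProduct_functionalMatrix_mulVec, ContinuousLinearMap.reApplyInnerSelf_apply,
    toEuclideanCLM_toLp, inner_re_symm, inner_toLp_toLp_eq_star_dotProduct]
  rfl

lemma isMaxOn_reApplyInnerSelf_functionalMatrix_iff (B : Matrix (Fin d) (Fin d) ℂ)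
    (l : ℂ →L[ℝ] ℝ) (x : Fin d → ℂ) :
    IsMaxOn (toEuclideanCLM (𝕜 := ℂ) (functionalMatrix B l)).reApplyInnerSelf (sphere 0 1)
        (WithLp.toLp 2 x) ↔ ∀ z ∈ numRange B, l z ≤ l (nrMap B x) := by
  rw [isMaxOn_iff, reApplyInnerSelf_toEuclideanCLM_functionalMatrix]
  constructor
  · rintro h _ ⟨y, hy, rfl⟩
    simpa only [reApplyInnerSelf_toEuclideanCLM_functionalMatrix] using
      h (WithLp.toLp 2 y) (by simpa using (norm_toLp_eq_one_iff y).2 hy)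
  · intro h v hv
    rw [← WithLp.toLp_ofLp (p := 2) v, reApplyInnerSelf_toEuclideanCLM_functionalMatrix]
    exact h _ ⟨v.ofLp, (norm_toLp_eq_one_iff _).1 (by simpa using hv), rfl⟩

theorem exists_orthonormal_nrMap_mem_of_isExposed {B : Matrix (Fin d) (Fin d) ℂ} {t : Set ℂ}
    (hface : IsExposed ℝ (numRange B) t) (ht : t.Nontrivial) :
    ∃ x y : Fin d → ℂ, star x ⬝ᵥ x = 1 ∧ star y ⬝ᵥ y = 1 ∧ star x ⬝ᵥ y = 0 ∧
      nrMap B x ∈ t ∧ nrMap B y ∈ t := by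
  obtain ⟨z₁, hz₁, z₂, hz₂, hz⟩ := ht
  obtain ⟨l, rfl⟩ := hface ⟨z₁, hz₁⟩
  obtain ⟨⟨x₁, hx₁, rfl⟩, hmax₁⟩ := hz₁
  obtain ⟨⟨x₂, hx₂, rfl⟩, hmax₂⟩ := hz₂
  have hT : IsSelfAdjoint (toEuclideanCLM (𝕜 := ℂ) (functionalMatrix B l)) :=
    (functionalMatrix_isHermitian B l).isSelfAdjoint.map _
  have hne : ∀ c : ℂ, WithLp.toLp 2 x₂ ≠ c • WithLp.toLp 2 x₁ := by
    rintro c hc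
    rw [← WithLp.toLp_smul, (WithLp.toLp_injective 2).eq_iff] at hc
    subst hc
    exact hz (nrMap_smul_of_unit hx₁ hx₂).symm
  obtain ⟨q, hq, hx₁q, hmaxq⟩ := hT.exists_isMaxOn_inner_eq_zero
    ((norm_toLp_eq_one_iff x₁).2 hx₁) ((norm_toLp_eq_one_iff x₂).2 hx₂)
    ((isMaxOn_reApplyInnerSelf_functionalMatrix_iff B l x₁).2 hmax₁)
    ((isMaxOn_reApplyInnerSelf_functionalMatrix_iff B l x₂).2 hmax₂) hne
  have hq' : star q.ofLp ⬝ᵥ q.ofLp = 1 := (norm_toLp_eq_one_iff q.ofLp).1 hq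
  refine ⟨x₁, q.ofLp, hx₁, hq', (inner_toLp_toLp_eq_star_dotProduct _ _).symm.trans hx₁q,
    ⟨⟨x₁, hx₁, rfl⟩, hmax₁⟩, ⟨⟨q.ofLp, hq', rfl⟩, ?_⟩⟩
  exact (isMaxOn_reApplyInnerSelf_functionalMatrix_iff B l q.ofLp).1 hmaxq

lemma continuous_nrMap :
    Continuous fun p : Matrix (Fin d) (Fin d) ℂ × (Fin d → ℂ) => nrMap p.1 p.2 := by
  unfold nrMap
  fun_prop

end NumericalRange

theorem stmt14_general {d : ℕ} (A : Matrix (Fin d) (Fin d) ℂ) (α : ℂ)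
    (Aseq : ℕ → Matrix (Fin d) (Fin d) ℂ) (s : ℕ → Set ℂ)
    (hconv : Filter.Tendsto Aseq Filter.atTop (nhds A))
    (hface : ∀ n, IsExposed ℝ (numRange (Aseq n)) (s n))
    (hseg : ∀ n, ∃ p q : ℂ, p ≠ q ∧ s n = segment ℝ p q)
    (hH : Filter.Tendsto (fun n => Metric.hausdorffDist (s n) {α}) Filter.atTop (nhds 0)) :
    ∃ p q : Fin d → ℂ, star p ⬝ᵥ p = 1 ∧ star q ⬝ᵥ q = 1 ∧
      nrMap A p = α ∧ nrMap A q = α ∧ star p ⬝ᵥ q = 0 := by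
  have hbdd : ∀ n, Bornology.IsBounded (s n) := fun n => by
    obtain ⟨a, b, -, hs⟩ := hseg n
    exact hs ▸ isBounded_closedBall.subset (segment_subset_closedBall_left a b)
  have hnontriv : ∀ n, (s n).Nontrivial := fun n => by
    obtain ⟨a, b, hab, hs⟩ := hseg n
    exact hs ▸ ⟨a, left_mem_segment ℝ a b, b, right_mem_segment ℝ a b, hab⟩
  choose u v hu hv huv hus hvs using fun n =>
    exists_orthonormal_nrMap_mem_of_isExposed (hface n) (hnontriv n)
  obtain ⟨⟨p, q⟩, ⟨hp, hq, hpq⟩, φ, hφ, hlim⟩ :=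
    isCompact_orthonormal_pairs.tendsto_subseq (x := fun n => (u n, v n))
      fun n => ⟨hu n, hv n, huv n⟩
  have nrMap_eq : ∀ {z : ℕ → Fin d → ℂ} {w : Fin d → ℂ}, Tendsto (z ∘ φ) atTop (𝓝 w) →
      (∀ n, nrMap (Aseq n) (z n) ∈ s n) → nrMap A w = α := fun hz hzs =>
    tendsto_nhds_unique
      ((continuous_nrMap.tendsto _).comp ((hconv.comp hφ.tendsto_atTop).prodMk_nhds hz))
      (tendsto_of_forall_mem_of_tendsto_hausdorffDist (fun n => hbdd (φ n)) (fun n => hzs (φ n))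
        (hH.comp hφ.tendsto_atTop))
  exact ⟨p, q, hp, hq, nrMap_eq hlim.fst_nhds hus, nrMap_eq hlim.snd_nhds hvs, hpq⟩

theorem stmt14 {d : ℕ} (A : Matrix (Fin d) (Fin d) ℂ) (α : ℂ) (hα : α ∈ numRange A)
    (Aseq : ℕ → Matrix (Fin d) (Fin d) ℂ) (s : ℕ → Set ℂ)
    (hconv : Filter.Tendsto Aseq Filter.atTop (nhds A))
    (hface : ∀ n, IsExposed ℝ (numRange (Aseq n)) (s n))
    (hseg : ∀ n, ∃ p q : ℂ, p ≠ q ∧ s n = segment ℝ p q)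
    (hH : Filter.Tendsto (fun n => Metric.hausdorffDist (s n) {α}) Filter.atTop (nhds 0)) :
    ∃ p q : Fin d → ℂ, star p ⬝ᵥ p = 1 ∧ star q ⬝ᵥ q = 1 ∧
      nrMap A p = α ∧ nrMap A q = α ∧ star p ⬝ᵥ q = 0 :=
  stmt14_general A α Aseq s hconv hface hseg hH
end

section
/- For 0 < β and α ∈ ℝ with α ∉ {0,1}, the 3×3 matrix M(α,β) with rows (α, (1−α)(1+β²)/β, α), (0, α, −αβ), (0, 0, 1) is unitarily irreducible: no nontrivial proper subspace of ℂ³ is invariant under both M and M*. -/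
open Matrix

theorem stmt18 (α β : ℝ) (hβ : 0 < β) (hα0 : α ≠ 0) (hα1 : α ≠ 1)
    (M : Matrix (Fin 3) (Fin 3) ℂ)
    (hM : M = !![(α:ℂ), (1 - (α:ℂ)) * (1 + (β:ℂ)^2) / (β:ℂ), (α:ℂ);
                 0, (α:ℂ), -((α:ℂ) * (β:ℂ));
                 0, 0, 1]) :
    ∀ p : Submodule ℂ (Fin 3 → ℂ),
      (∀ x ∈ p, M *ᵥ x ∈ p) → (∀ x ∈ p, Mᴴ *ᵥ x ∈ p) → p = ⊥ ∨ p = ⊤ := by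
  intro p hMp hHp
  by_cases hp : p = ⊥
  · exact Or.inl hp
  right
  obtain ⟨a, ha⟩ : ∃ a : ℂ, a = (α:ℂ) := ⟨_, rfl⟩
  obtain ⟨b, hb⟩ : ∃ b : ℂ, b = (β:ℂ) := ⟨_, rfl⟩
  obtain ⟨c, hc⟩ : ∃ c : ℂ, c = (1 - a) * (1 + b^2) / b := ⟨_, rfl⟩
  have hb0 : b ≠ 0 := by
    rw [hb]; exact_mod_cast ne_of_gt hβ
  have ha0 : a ≠ 0 := by
    rw [ha]; exact_mod_cast hα0
  have ha1 : (1:ℂ) - a ≠ 0 := by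
    rw [ha, sub_ne_zero]
    intro h
    exact hα1 (by exact_mod_cast h.symm)
  have hbsq : (1:ℂ) + b^2 ≠ 0 := by
    have h1 : (1:ℂ) + b^2 = ((1 + β^2 : ℝ) : ℂ) := by rw [hb]; push_cast; ring
    rw [h1]
    exact_mod_cast ne_of_gt (by positivity : (0:ℝ) < 1 + β^2)
  have hc0 : c ≠ 0 := by
    rw [hc]; exact div_ne_zero (mul_ne_zero ha1 hbsq) hb0
  have hbc : c * b = (1 - a) * (1 + b^2) := by
    rw [hc]; exact div_mul_cancel₀ _ hb0
  -- explicit action of M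
  have hMv : ∀ v : Fin 3 → ℂ,
      M *ᵥ v = ![a * v 0 + c * v 1 + a * v 2, a * v 1 - a * b * v 2, v 2] := by
    intro v
    subst hM
    funext i
    fin_cases i <;>
      simp [mulVec, dotProduct, Fin.sum_univ_three, ha, hb, hc] <;> ring
  -- explicit action of Mᴴ
  have hstarc : star c = c := by
    rw [hc, ha, hb]
    simp [star_div₀, Complex.star_def, map_sub, map_add, map_pow,
      Complex.conj_ofReal]
  have hMH : Mᴴ = !![a, 0, 0; c, a, 0; a, -(a*b), 1] := by
    subst hM
    ext i j
    fin_cases i <;> fin_cases j <;>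
      simp [conjTranspose_apply, Complex.star_def, map_neg, _root_.map_mul,
        ha, hb, hc, Complex.conj_ofReal, Matrix.vecHead, Matrix.vecTail,
        map_div₀, map_sub, map_add, map_pow, _root_.map_one]
  have hHv : ∀ v : Fin 3 → ℂ,
      Mᴴ *ᵥ v = ![a * v 0, c * v 0 + a * v 1, a * v 0 - a * b * v 1 + v 2] := by
    intro v
    rw [hMH]
    funext i
    fin_cases i <;>
      simp [mulVec, dotProduct, Fin.sum_univ_three] <;> ring
  -- the distinguished vectors
  obtain ⟨t0, ht0⟩ : ∃ t : ℂ, t = -(a * b^2 * (1 - a)) := ⟨_, rfl⟩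
  obtain ⟨t1, ht1⟩ : ∃ t : ℂ, t = -(a * b * (1 - a)) := ⟨_, rfl⟩
  obtain ⟨t2, ht2⟩ : ∃ t : ℂ, t = (1 - a)^2 := ⟨_, rfl⟩
  set tv : Fin 3 → ℂ := ![t0, t1, t2] with htv
  set e0 : Fin 3 → ℂ := ![1, 0, 0] with he0d
  set e1 : Fin 3 → ℂ := ![0, 1, 0] with he1d
  set e2 : Fin 3 → ℂ := ![0, 0, 1] with he2d
  -- (M - aI)^2 v = v 2 • tv
  have hQ' : ∀ v ∈ p, v 2 • tv ∈ p := by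
    intro v hv
    have h1 := hMp v hv
    have h2 := hMp _ h1
    have h3 : M *ᵥ (M *ᵥ v) - (2*a) • (M *ᵥ v) + (a^2) • v = v 2 • tv := by
      funext i
      simp only [hMv, htv, ht0, ht1, ht2]
      fin_cases i
      · simp
        linear_combination (-(a * v 2)) * hbc
      · simp
        ring
      · simp
        ring
    have h4 := p.add_mem (p.sub_mem h2 (p.smul_mem (2*a) h1)) (p.smul_mem (a^2) hv)
    rwa [h3] at h4
  -- (Mᴴ - aI)^2 v = (t·v) • e2
  have hQ : ∀ v ∈ p, (t0 * v 0 + t1 * v 1 + t2 * v 2) • e2 ∈ p := by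
    intro v hv
    have h1 := hHp v hv
    have h2 := hHp _ h1
    have h3 : Mᴴ *ᵥ (Mᴴ *ᵥ v) - (2*a) • (Mᴴ *ᵥ v) + (a^2) • v
        = (t0 * v 0 + t1 * v 1 + t2 * v 2) • e2 := by
      funext i
      simp only [hHv, he2d, ht0, ht1, ht2]
      fin_cases i
      · simp
        ring
      · simp
        ring
      · simp
        linear_combination (-(a * v 0)) * hbc
    have h4 := p.add_mem (p.sub_mem h2 (p.smul_mem (2*a) h1)) (p.smul_mem (a^2) hv)
    rwa [h3] at h4
  -- from any v ∈ p with v 2 ≠ 0, get e2 ∈ p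
  have key : ∀ v ∈ p, v 2 ≠ 0 → e2 ∈ p := by
    intro v hv h2
    have ht : tv ∈ p := by
      have h := p.smul_mem (v 2)⁻¹ (hQ' v hv)
      rwa [smul_smul, inv_mul_cancel₀ h2, one_smul] at h
    have hts := hQ tv ht
    have hne : t0 * tv 0 + t1 * tv 1 + t2 * tv 2 ≠ 0 := by
      have he : t0 * tv 0 + t1 * tv 1 + t2 * tv 2
          = ((α^2*β^4*(1-α)^2 + α^2*β^2*(1-α)^2 + (1-α)^4 : ℝ) : ℂ) := by
        simp only [htv, ht0, ht1, ht2, ha, hb]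
        push_cast
        simp
        ring
      rw [he]
      have h1α : (1:ℝ) - α ≠ 0 := fun h => hα1 (by linarith)
      exact_mod_cast ne_of_gt (by positivity :
        (0:ℝ) < α^2*β^4*(1-α)^2 + α^2*β^2*(1-α)^2 + (1-α)^4)
    have h := p.smul_mem (t0 * tv 0 + t1 * tv 1 + t2 * tv 2)⁻¹ hts
    rwa [smul_smul, inv_mul_cancel₀ hne, one_smul] at h
  -- e2 ∈ p
  obtain ⟨x, hxp, hx0⟩ := (Submodule.ne_bot_iff p).mp hp
  have he2 : e2 ∈ p := by
    by_cases hd : x 2 = 0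
    swap
    · exact key x hxp hd
    have hy : Mᴴ *ᵥ x ∈ p := hHp x hxp
    by_cases hy2 : (Mᴴ *ᵥ x) 2 = 0
    swap
    · exact key _ hy hy2
    rw [hHv] at hy2
    simp only [Matrix.cons_val_two, Matrix.head_cons, Matrix.tail_cons] at hy2
    rw [hd] at hy2
    have hx01 : x 0 = b * x 1 := by
      have := mul_left_cancel₀ ha0 (show a * x 0 = a * (b * x 1) by
        linear_combination hy2)
      exact this
    by_cases hs : t0 * x 0 + t1 * x 1 + t2 * x 2 = 0
    swap
    · have hts := hQ x hxp
      have h := p.smul_mem (t0 * x 0 + t1 * x 1 + t2 * x 2)⁻¹ hts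
      rwa [smul_smul, inv_mul_cancel₀ hs, one_smul] at h
    exfalso
    rw [hx01, hd] at hs
    have hfac : x 1 * (-(a * b * (1 - a) * (b^2 + 1))) = 0 := by
      rw [ht0, ht1, ht2] at hs
      linear_combination hs
    have hfne : -(a * b * (1 - a) * (b^2 + 1)) ≠ 0 := by
      apply neg_ne_zero.mpr
      apply mul_ne_zero (mul_ne_zero (mul_ne_zero ha0 hb0) ha1)
      rwa [add_comm] at hbsq
    have hx1 : x 1 = 0 := by
      rcases mul_eq_zero.mp hfac with h | h
      · exact h
      · exact absurd h hfne
    apply hx0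
    funext i
    fin_cases i
    · show x 0 = 0
      rw [hx01, hx1, mul_zero]
    · exact hx1
    · exact hd
  -- bootstrap: v = (1, -b, 0) ∈ p
  have hv1 : (![1, -b, 0] : Fin 3 → ℂ) ∈ p := by
    have h1 := p.sub_mem (hMp _ he2) he2
    have h3 : M *ᵥ e2 - e2 = a • ![1, -b, 0] := by
      funext i
      simp only [hMv, he2d]
      fin_cases i <;> simp <;> (first | rfl | ring)
    rw [h3] at h1
    have h2 := p.smul_mem a⁻¹ h1
    rwa [smul_smul, inv_mul_cancel₀ ha0, one_smul] at h2
  -- e1 ∈ p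
  have he1 : e1 ∈ p := by
    have h1 := p.sub_mem (p.sub_mem (hHp _ hv1)
      (p.smul_mem (a * (1 + b^2)) he2)) (p.smul_mem a hv1)
    have h3 : Mᴴ *ᵥ ![1, -b, 0] - (a * (1 + b^2)) • e2 - a • ![1, -b, 0] = c • e1 := by
      funext i
      simp only [hHv, he2d, he1d]
      fin_cases i <;> simp <;> (first | rfl | ring)
    rw [h3] at h1
    have h2 := p.smul_mem c⁻¹ h1
    rwa [smul_smul, inv_mul_cancel₀ hc0, one_smul] at h2
  -- e0 ∈ p
  have he0 : e0 ∈ p := by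
    have h1 := p.add_mem hv1 (p.smul_mem b he1)
    have h3 : (![1, -b, 0] : Fin 3 → ℂ) + b • e1 = e0 := by
      funext i
      simp only [he0d, he1d]
      fin_cases i <;> simp
    rwa [h3] at h1
  -- conclude p = ⊤
  rw [Submodule.eq_top_iff']
  intro z
  have hz : z = z 0 • e0 + z 1 • e1 + z 2 • e2 := by
    funext i
    simp only [he0d, he1d, he2d]
    fin_cases i <;> simp
  rw [hz]
  exact p.add_mem (p.add_mem (p.smul_mem _ he0) (p.smul_mem _ he1)) (p.smul_mem _ he2)
end
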